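/- Let 0 < ℓ < r be real numbers and set a = e^{ℓ−r}. For all s, t ∈ ℂ with |s| = |t| = 1, writing ψ(s) = s/(e^ℓ − s) and χ(t) = t/(e^r − t), one has 2·Re( (s ψ(s) − a t χ(t))/(s − a t) − (−s − s·conj(ψ(s)) − a t χ(t))/(s − a t) ) − Re( ψ(s) + conj(ψ(s)) + 1 ) = ((1 − e^{2(ℓ−r)})/|s − e^{ℓ−r} t|²) · ((e^{2ℓ} − 1)/|e^ℓ − s|²). (Note s ≠ a t automatically since |s| = 1 and |a t| = a < 1.) -/

import Mathlib

/-!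
Everything reduces to the Poisson-kernel identity `Re((x + y)/(x - y)) = (|x|² - |y|²)/|x - y|²`.
The `χ` terms cancel, leaving `2 Re(s P/(s - a t)) - P` with the real number
`P = ψ + conj ψ + 1 = Re((e^ℓ + s)/(e^ℓ - s))`; so the left side is
`P · (2 Re(s/(s - a t)) - 1) = P · Re((s + a t)/(s - a t))`, a product of
two Poisson kernels.
-/

namespace Complex

theorem re_add_div_sub (x y : ℂ) :
    ((x + y) / (x - y)).re = (‖x‖ ^ 2 - ‖y‖ ^ 2) / ‖x - y‖ ^ 2 := by
  simp only [div_re, Complex.sq_norm, normSq_apply, add_re, add_im, sub_re, sub_im]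
  rw [← add_div]
  congr 1
  ring

theorem two_mul_re_div_sub_sub_one {x y : ℂ} (h : x ≠ y) :
    2 * (x / (x - y)).re - 1 = (‖x‖ ^ 2 - ‖y‖ ^ 2) / ‖x - y‖ ^ 2 := by
  have hxy : x - y ≠ 0 := sub_ne_zero.mpr h
  rw [← re_add_div_sub, show (x + y) / (x - y) = 2 * (x / (x - y)) - 1 by field_simp; ring]
  simp

theorem two_mul_re_div_sub_add_one {x y : ℂ} (h : x ≠ y) :
    2 * (y / (x - y)).re + 1 = (‖x‖ ^ 2 - ‖y‖ ^ 2) / ‖x - y‖ ^ 2 := by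
  have hxy : x - y ≠ 0 := sub_ne_zero.mpr h
  rw [← re_add_div_sub, show (x + y) / (x - y) = 2 * (y / (x - y)) + 1 by field_simp; ring]
  simp

end Complex

theorem stmt_6_general (ℓ r : ℝ) (hℓ : 0 < ℓ) (hℓr : ℓ < r)
    (a : ℝ) (ha : a = Real.exp (ℓ - r))
    (s t : ℂ) (hs : ‖s‖ = 1) (ht : ‖t‖ = 1)
    (ψ χ : ℂ) (hψ : ψ = s / ((Real.exp ℓ : ℂ) - s)) :
    2 * ((s * ψ - (a : ℂ) * t * χ) / (s - (a : ℂ) * t) -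
          (-s - s * starRingEnd ℂ ψ - (a : ℂ) * t * χ) / (s - (a : ℂ) * t)).re -
      (ψ + starRingEnd ℂ ψ + 1).re =
    ((1 - Real.exp (2 * (ℓ - r))) / ‖s - (Real.exp (ℓ - r) : ℂ) * t‖ ^ 2) *
      ((Real.exp (2 * ℓ) - 1) / ‖(Real.exp ℓ : ℂ) - s‖ ^ 2) := by
  subst ha hψ
  have hexp_sq (x : ℝ) : Real.exp (2 * x) = ‖(Real.exp x : ℂ)‖ ^ 2 := by
    rw [Complex.norm_real, Real.norm_of_nonneg (Real.exp_nonneg x), ← Real.exp_nat_mul]; norm_num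
  have hne_s : (Real.exp ℓ : ℂ) ≠ s := fun h => by
    have := congrArg norm h
    rw [hs, Complex.norm_real, Real.norm_of_nonneg (Real.exp_nonneg ℓ)] at this
    exact (Real.one_lt_exp_iff.mpr hℓ).ne' this
  have hne_at : s ≠ (Real.exp (ℓ - r) : ℂ) * t := fun h => by
    have := congrArg norm h
    rw [hs, norm_mul, ht, mul_one, Complex.norm_real,
      Real.norm_of_nonneg (Real.exp_nonneg _)] at this
    exact (Real.exp_lt_one_iff.mpr (by linarith : ℓ - r < 0)).ne this.symm
  set ψ := s / ((Real.exp ℓ : ℂ) - s)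
  set z := (Real.exp (ℓ - r) : ℂ) * t
  have hpoisson : ψ + starRingEnd ℂ ψ + 1 = ((2 * ψ.re + 1 : ℝ) : ℂ) := by
    rw [Complex.add_conj]; push_cast; ring
  have hχ_cancel : (s * ψ - z * χ) / (s - z) - (-s - s * starRingEnd ℂ ψ - z * χ) / (s - z)
      = ((2 * ψ.re + 1 : ℝ) : ℂ) * (s / (s - z)) := by
    rw [← hpoisson]; ring
  calc _ = (2 * ψ.re + 1) * (2 * (s / (s - z)).re - 1) := by
        rw [hχ_cancel, hpoisson, Complex.re_ofReal_mul, Complex.ofReal_re]; ring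
    _ = _ := by
        rw [Complex.two_mul_re_div_sub_add_one hne_s, Complex.two_mul_re_div_sub_sub_one hne_at,
          hexp_sq, hexp_sq, hs, norm_mul, ht, mul_one]
        ring

/-- The central computation for the free unitary multiplicative Lévy process: for
`0 < ℓ < r`, `a = e^{ℓ-r}`, `s, t` on the unit circle, `ψ = s/(e^ℓ - s)`, `χ = t/(e^r - t)`,
the boundary expression equals the product of the two Poisson kernels. -/
theorem stmt_6 (ℓ r : ℝ) (hℓ : 0 < ℓ) (hℓr : ℓ < r)
    (a : ℝ) (ha : a = Real.exp (ℓ - r))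
    (s t : ℂ) (hs : ‖s‖ = 1) (ht : ‖t‖ = 1)
    (ψ χ : ℂ) (hψ : ψ = s / ((Real.exp ℓ : ℂ) - s)) (hχ : χ = t / ((Real.exp r : ℂ) - t)) :
    2 * ((s * ψ - (a : ℂ) * t * χ) / (s - (a : ℂ) * t) -
          (-s - s * starRingEnd ℂ ψ - (a : ℂ) * t * χ) / (s - (a : ℂ) * t)).re -
      (ψ + starRingEnd ℂ ψ + 1).re =
    ((1 - Real.exp (2 * (ℓ - r))) / ‖s - (Real.exp (ℓ - r) : ℂ) * t‖ ^ 2) *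
      ((Real.exp (2 * ℓ) - 1) / ‖(Real.exp ℓ : ℂ) - s‖ ^ 2) :=
  stmt_6_general ℓ r hℓ hℓr a ha s t hs ht ψ χ hψ
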